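/- arXiv:2002.07796 — 5 statements merged into one kernel-verified Lean document; each statement's English description precedes it below -/
import Mathlib

section
/- For real x, y, k, l, r with x ≥ y, k ≥ l ≥ r ≥ 0, and y - l ≥ x - k ≥ 0, the continuous binomial coefficients satisfy C(x,k)·C(y,l) ≥ C(x,k+r)·C(y,l-r). -/
/-!
Both sides share the numerator `Γ(1+x) Γ(1+y)`. When every Gamma argument is positive the
inequality therefore compares denominators, and it follows from the log-convexity of `Γ` in the
form `Γ(a+t) Γ(b) ≤ Γ(a) Γ(b+t)` for `0 < a ≤ b`, `0 ≤ t`, applied to the pairs `(1+l-r, 1+k)` and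
`(1+x-k-r, 1+y-l)`.

The only argument that can be nonpositive is `1+x-k-r`, and there `Real.Gamma` may be negative
(or `0` at a pole). In that case `Γ(s+1) = s Γ(s)` gives
`f(r+1) = f(r) · (x-k-r)/(k+r+1) · (l-r)/(y-l+r+1)` for `f(r) = C(x,k+r) C(y,l-r)`, a factor of
absolute value at most `1`; so `|f|` does not increase in steps of one, and decreasing `r` by
whole units reaches the region `x-k-r > -1` where `f(r) ≤ f(0)`.
-/

/-- The continuous binomial coefficient. -/
noncomputable def contBinom (x k : ℝ) : ℝ :=
  Real.Gamma (1 + x) / (Real.Gamma (1 + k) * Real.Gamma (1 + x - k))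

open Real

theorem ConvexOn.map_add_sub_le_map_add_sub {𝕜 : Type*} [Field 𝕜] [LinearOrder 𝕜]
    [IsStrictOrderedRing 𝕜] {s : Set 𝕜} {f : 𝕜 → 𝕜} (hf : ConvexOn 𝕜 s f) {a b t : 𝕜}
    (ha : a ∈ s) (hbt : b + t ∈ s) (hab : a ≤ b) (ht : 0 ≤ t) :
    f (a + t) - f a ≤ f (b + t) - f b := by
  rcases (add_nonneg (sub_nonneg.2 hab) ht).eq_or_lt with hd | hd
  · obtain rfl : t = 0 := by linarith
    obtain rfl : b = a := by linarith
    rfl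
  set μ := (b - a) / (b - a + t)
  set ν := t / (b - a + t)
  have hw : μ + ν = 1 := by rw [← add_div, div_self hd.ne']
  have hμ : 0 ≤ μ := div_nonneg (sub_nonneg.2 hab) hd.le
  have hν : 0 ≤ ν := div_nonneg ht hd.le
  have h₁ := hf.2 ha hbt hμ hν hw
  have h₂ := hf.2 ha hbt hν hμ (by rw [add_comm, hw])
  have e₁ : μ • a + ν • (b + t) = a + t := by
    simp only [μ, ν, smul_eq_mul]; field_simp; ring
  have e₂ : ν • a + μ • (b + t) = b := by
    simp only [μ, ν, smul_eq_mul]; field_simp; ring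
  rw [e₁] at h₁
  rw [e₂] at h₂
  simp only [smul_eq_mul] at h₁ h₂
  linear_combination h₁ + h₂ + (f a + f (b + t)) * hw

theorem Real.Gamma_add_mul_Gamma_le {a b t : ℝ} (ha : 0 < a) (hab : a ≤ b) (ht : 0 ≤ t) :
    Gamma (a + t) * Gamma b ≤ Gamma a * Gamma (b + t) := by
  have hb : 0 < b := ha.trans_le hab
  have hbt : b + t ∈ Set.Ioi 0 := by simp only [Set.mem_Ioi]; linarith
  have := convexOn_log_Gamma.map_add_sub_le_map_add_sub ha hbt hab ht
  simp only [Function.comp_apply] at this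
  rw [← log_le_log_iff (by positivity) (by positivity), log_mul, log_mul]
  · linarith
  all_goals positivity

theorem contBinom_pos {x k : ℝ} (hx : -1 < x) (hk : -1 < k) (hxk : -1 < x - k) :
    0 < contBinom x k := by
  have := Gamma_pos_of_pos (show 0 < 1 + x by linarith)
  have := Gamma_pos_of_pos (show 0 < 1 + k by linarith)
  have := Gamma_pos_of_pos (show 0 < 1 + x - k by linarith)
  unfold contBinom
  positivity

theorem contBinom_add_one (x : ℝ) {k : ℝ} (hk : k + 1 ≠ 0) :
    contBinom x (k + 1) = contBinom x k * ((x - k) / (k + 1)) := by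
  rcases eq_or_ne (x - k) 0 with hxk | hxk
  · simp [contBinom, show 1 + x - (k + 1) = 0 by linarith, hxk]
  have hΓk : Gamma (1 + (k + 1)) = (k + 1) * Gamma (1 + k) := by
    rw [show 1 + (k + 1) = 1 + k + 1 by ring, Gamma_add_one (by rwa [add_comm]), add_comm 1 k]
  have hΓxk : Gamma (1 + x - k) = (x - k) * Gamma (1 + x - (k + 1)) := by
    rw [show 1 + x - k = x - k + 1 by ring, Gamma_add_one hxk]
    ring_nf
  unfold contBinom
  calc Gamma (1 + x) / (Gamma (1 + (k + 1)) * Gamma (1 + x - (k + 1)))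
      = Gamma (1 + x) * (x - k) /
          ((k + 1) * Gamma (1 + k) * Gamma (1 + x - (k + 1)) * (x - k)) := by
        rw [hΓk, mul_div_mul_right _ _ hxk]
    _ = Gamma (1 + x) / (Gamma (1 + k) * Gamma (1 + x - k)) * ((x - k) / (k + 1)) := by
        rw [hΓxk, div_mul_div_comm]; congr 1; ring

theorem contBinom_mul_contBinom_shift_le {x y k l r : ℝ} (hkl : l ≤ k) (hr : 0 ≤ r) (hrl : r ≤ l)
    (hyl : x - k ≤ y - l) (hxkr : -1 < x - k - r) :
    contBinom x (k + r) * contBinom y (l - r) ≤ contBinom x k * contBinom y l := by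
  have hΓkl : Gamma (1 + l) * Gamma (1 + k) ≤ Gamma (1 + (l - r)) * Gamma (1 + (k + r)) := by
    convert Gamma_add_mul_Gamma_le (a := 1 + (l - r)) (b := 1 + k) (by linarith) (by linarith) hr
      using 3 <;> ring
  have hΓy : Gamma (1 + x - k) * Gamma (1 + y - l) ≤
      Gamma (1 + x - (k + r)) * Gamma (1 + y - (l - r)) := by
    convert Gamma_add_mul_Gamma_le (a := 1 + x - (k + r)) (b := 1 + y - l) (by linarith)
      (by linarith) hr using 3 <;> ring
  have := Gamma_pos_of_pos (show 0 < 1 + x by linarith)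
  have := Gamma_pos_of_pos (show 0 < 1 + y by linarith)
  have := Gamma_pos_of_pos (show 0 < 1 + k by linarith)
  have := Gamma_pos_of_pos (show 0 < 1 + l by linarith)
  have := Gamma_pos_of_pos (show 0 < 1 + x - k by linarith)
  have := Gamma_pos_of_pos (show 0 < 1 + y - l by linarith)
  unfold contBinom
  rw [div_mul_div_comm, div_mul_div_comm]
  refine div_le_div_of_nonneg_left (by positivity) (by positivity) ?_
  calc Gamma (1 + k) * Gamma (1 + x - k) * (Gamma (1 + l) * Gamma (1 + y - l))
      = Gamma (1 + l) * Gamma (1 + k) * (Gamma (1 + x - k) * Gamma (1 + y - l)) := by ring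
    _ ≤ Gamma (1 + (l - r)) * Gamma (1 + (k + r)) *
          (Gamma (1 + x - (k + r)) * Gamma (1 + y - (l - r))) :=
        mul_le_mul hΓkl hΓy (by positivity) (hΓkl.trans' (by positivity))
    _ = _ := by ring

theorem abs_contBinom_mul_contBinom_succ_le {x y k l r : ℝ} (hkl : l ≤ k) (hr : 0 ≤ r)
    (hrl : r + 1 ≤ l) (hyl : x - k ≤ y - l) (hxk : 0 ≤ x - k) :
    |contBinom x (k + (r + 1)) * contBinom y (l - (r + 1))| ≤
      |contBinom x (k + r) * contBinom y (l - r)| := by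
  set A := contBinom x (k + r)
  set B := contBinom y (l - (r + 1))
  have hA : contBinom x (k + (r + 1)) = A * ((x - (k + r)) / (k + r + 1)) := by
    rw [← add_assoc, contBinom_add_one x (by linarith)]
  have hB : contBinom y (l - r) = B * ((y - (l - (r + 1))) / (l - r)) := by
    have := contBinom_add_one y (k := l - (r + 1)) (by linarith)
    rwa [show l - (r + 1) + 1 = l - r by ring] at this
  have hp : |x - (k + r)| * (l - r) ≤ (y - (l - (r + 1))) * (k + r + 1) :=
    mul_le_mul (abs_le.2 ⟨by linarith, by linarith⟩) (by linarith) (by linarith) (by linarith)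
  have huv : 0 ≤ (y - (l - (r + 1))) / (l - r) := div_nonneg (by linarith) (by linarith)
  rw [hA, hB]
  calc |A * ((x - (k + r)) / (k + r + 1)) * B|
      = |A * B| * (|x - (k + r)| / (k + r + 1)) := by
        rw [abs_mul, abs_mul, abs_mul, abs_div, abs_of_pos (show 0 < k + r + 1 by linarith)]; ring
    _ ≤ |A * B| * ((y - (l - (r + 1))) / (l - r)) :=
        mul_le_mul_of_nonneg_left ((div_le_div_iff₀ (by linarith) (by linarith)).2 hp)
          (abs_nonneg _)
    _ = |A * (B * ((y - (l - (r + 1))) / (l - r)))| := by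
        rw [abs_mul, abs_mul, abs_mul, abs_of_nonneg huv]; ring

theorem abs_contBinom_mul_contBinom_shift_le {x y k l : ℝ} (hkl : l ≤ k) (hyl : x - k ≤ y - l)
    (hxk : 0 ≤ x - k) (n : ℕ) : ∀ r, 0 ≤ r → r ≤ l → r < n →
    |contBinom x (k + r) * contBinom y (l - r)| ≤ contBinom x k * contBinom y l := by
  induction n with
  | zero => intro r hr _ hrn; exact absurd hrn (by simpa using hr)
  | succ n ih =>
    intro r hr hrl hrn
    rcases lt_or_ge (-1) (x - k - r) with hgood | hbad
    · rw [abs_of_nonneg (mul_pos (contBinom_pos (by linarith) (by linarith) (by linarith))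
        (contBinom_pos (by linarith) (by linarith) (by linarith))).le]
      exact contBinom_mul_contBinom_shift_le hkl hr hrl hyl hgood
    · have hstep := abs_contBinom_mul_contBinom_succ_le (r := r - 1) hkl (by linarith)
        (by linarith) hyl hxk
      rw [sub_add_cancel] at hstep
      exact hstep.trans (ih (r - 1) (by linarith) (by linarith) (by push_cast at hrn; linarith))

theorem contBinom_strongly_log_concave_general
    (x y k l r : ℝ) (hkl : k ≥ l) (hlr : l ≥ r) (hr : r ≥ 0)
    (h1 : y - l ≥ x - k) (h2 : x - k ≥ 0) :
    contBinom x k * contBinom y l ≥ contBinom x (k + r) * contBinom y (l - r) := by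
  obtain ⟨n, hn⟩ := exists_nat_gt r
  exact (le_abs_self _).trans (abs_contBinom_mul_contBinom_shift_le hkl h1 h2 n r hr hlr hn)

theorem contBinom_strongly_log_concave
    (x y k l r : ℝ) (hxy : x ≥ y) (hkl : k ≥ l) (hlr : l ≥ r) (hr : r ≥ 0)
    (h1 : y - l ≥ x - k) (h2 : x - k ≥ 0) :
    contBinom x k * contBinom y l ≥ contBinom x (k + r) * contBinom y (l - r) :=
  contBinom_strongly_log_concave_general x y k l r hkl hlr hr h1 h2
end

section
/- For 0 < q < 1, 0 < a < 1, the a;q-numbers [x]_{a;q} are continuously strongly log-concave: for all real x ≥ y ≥ r ≥ 0, [x]_{a;q}·[y]_{a;q} ≥ [x+r]_{a;q}·[y-r]_{a;q}. -/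
/-- The a;q-number. -/
noncomputable def aqNum (a q x : ℝ) : ℝ :=
  ((1 - q ^ x) * (1 - a * q ^ x)) / ((1 - q) * (1 - a * q)) * q ^ (1 - x)

set_option maxHeartbeats 1000000 in
theorem aqNum_strongly_log_concave
    (a q x y r : ℝ) (hq : 0 < q) (hq1 : q < 1) (ha : 0 < a) (ha1 : a < 1)
    (hxy : x ≥ y) (hyr : y ≥ r) (hr : r ≥ 0) :
    aqNum a q x * aqNum a q y ≥ aqNum a q (x + r) * aqNum a q (y - r) := by
  set X := q ^ x with hX
  set Y := q ^ (y - r) with hY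
  set S := q ^ r with hS
  have hx0 : (0:ℝ) ≤ x := le_trans hr (le_trans hyr hxy)
  have hyr0 : (0:ℝ) ≤ y - r := sub_nonneg.mpr hyr
  have hXpos : 0 < X := Real.rpow_pos_of_pos hq x
  have hYpos : 0 < Y := Real.rpow_pos_of_pos hq (y - r)
  have hSpos : 0 < S := Real.rpow_pos_of_pos hq r
  have hX1 : X ≤ 1 := Real.rpow_le_one hq.le hq1.le hx0
  have hY1 : Y ≤ 1 := Real.rpow_le_one hq.le hq1.le hyr0
  have hS1 : S ≤ 1 := Real.rpow_le_one hq.le hq1.le hr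
  have hXY : X ≤ Y := Real.rpow_le_rpow_of_exponent_ge hq hq1.le (by linarith)
  have hqy : q ^ y = Y * S := by rw [hY, hS, ← Real.rpow_add hq]; ring_nf
  have hqxr : q ^ (x + r) = X * S := by rw [hX, hS, ← Real.rpow_add hq]
  have hYS1 : Y * S ≤ 1 := by nlinarith
  have hXS1 : X * S ≤ 1 := by nlinarith
  -- key polynomial inequality
  have h1 : (1 - X * S) * (1 - Y) ≤ (1 - X) * (1 - Y * S) := by nlinarith
  have h2 : (1 - a * (X * S)) * (1 - a * Y) ≤ (1 - a * X) * (1 - a * (Y * S)) := by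
    nlinarith [mul_nonneg (sub_nonneg.mpr hS1) (mul_nonneg ha.le (sub_nonneg.mpr hXY))]
  have haX1 : a * X ≤ 1 := by nlinarith
  have haY1 : a * Y ≤ 1 := by nlinarith
  have haXS1 : a * (X * S) ≤ 1 := by nlinarith
  have haYS1 : a * (Y * S) ≤ 1 := by nlinarith
  have key : (1 - X * S) * (1 - Y) * ((1 - a * (X * S)) * (1 - a * Y)) ≤
      (1 - X) * (1 - Y * S) * ((1 - a * X) * (1 - a * (Y * S))) := by
    apply mul_le_mul h1 h2
    · exact mul_nonneg (by linarith) (by linarith)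
    · exact mul_nonneg (by linarith) (by linarith)
  have haq : a * q < 1 := lt_trans (by simpa using mul_lt_mul_of_pos_right ha1 hq) hq1
  have hD : 0 < (1 - q) * (1 - a * q) := mul_pos (by linarith) (by linarith)
  have hc : 0 < q ^ (1 - x) * q ^ (1 - y) := by
    exact mul_pos (Real.rpow_pos_of_pos hq _) (Real.rpow_pos_of_pos hq _)
  have hpow : q ^ (1 - (x + r)) * q ^ (1 - (y - r)) = q ^ (1 - x) * q ^ (1 - y) := by
    rw [← Real.rpow_add hq, ← Real.rpow_add hq]; ring_nf
  have e1 : aqNum a q (x + r) * aqNum a q (y - r) =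
      (1 - X * S) * (1 - Y) * ((1 - a * (X * S)) * (1 - a * Y)) *
        ((q ^ (1 - x) * q ^ (1 - y)) * (((1 - q) * (1 - a * q))⁻¹) ^ 2) := by
    unfold aqNum
    rw [← hpow, hqxr, ← hY]
    ring
  have e2 : aqNum a q x * aqNum a q y =
      (1 - X) * (1 - Y * S) * ((1 - a * X) * (1 - a * (Y * S))) *
        ((q ^ (1 - x) * q ^ (1 - y)) * (((1 - q) * (1 - a * q))⁻¹) ^ 2) := by
    unfold aqNum
    rw [hqy, ← hX]
    ring
  rw [ge_iff_le, e1, e2]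
  exact mul_le_mul_of_nonneg_right key
    (mul_nonneg hc.le (by positivity))
end

section
/- For 0 < q < 1, 0 < b < 1, the (b;q)-numbers [x]_{(b;q)} are continuously strongly log-concave: for all real x ≥ y ≥ r ≥ 0, [x]_{(b;q)}·[y]_{(b;q)} ≥ [x+r]_{(b;q)}·[y-r]_{(b;q)}. -/
/-- The (b;q)-number. -/
noncomputable def bqNum (b q x : ℝ) : ℝ :=
  ((1 - q ^ x) * (1 - b * q)) / ((1 - q) * (1 - b * q ^ x))

theorem bqNum_strongly_log_concave
    (b q x y r : ℝ) (hq : 0 < q) (hq1 : q < 1) (hb : 0 < b) (hb1 : b < 1)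
    (hxy : x ≥ y) (hyr : y ≥ r) (hr : r ≥ 0) :
    bqNum b q x * bqNum b q y ≥ bqNum b q (x + r) * bqNum b q (y - r) := by
  have hx0 : (0:ℝ) ≤ x := by linarith
  have hy0 : (0:ℝ) ≤ y := by linarith
  set U := q ^ x with hUdef
  set V := q ^ y with hVdef
  set S := q ^ (x + r) with hSdef
  set W := q ^ (y - r) with hWdef
  have hUpos : 0 < U := Real.rpow_pos_of_pos hq x
  have hVpos : 0 < V := Real.rpow_pos_of_pos hq y
  have hSpos : 0 < S := Real.rpow_pos_of_pos hq (x + r)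
  have hWpos : 0 < W := Real.rpow_pos_of_pos hq (y - r)
  have hU1 : U ≤ 1 := Real.rpow_le_one hq.le hq1.le hx0
  have hV1 : V ≤ 1 := Real.rpow_le_one hq.le hq1.le hy0
  have hS1 : S ≤ 1 := Real.rpow_le_one hq.le hq1.le (by linarith)
  have hW1 : W ≤ 1 := Real.rpow_le_one hq.le hq1.le (by linarith)
  have hSU : S ≤ U := Real.rpow_le_rpow_of_exponent_ge hq hq1.le (by linarith)
  have hSV : S ≤ V := Real.rpow_le_rpow_of_exponent_ge hq hq1.le (by linarith)
  have hSW : S * W = U * V := by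
    rw [hSdef, hWdef, hUdef, hVdef, ← Real.rpow_add hq, ← Real.rpow_add hq]
    ring_nf
  have h1q : (0:ℝ) < 1 - q := by linarith
  have hbq : (0:ℝ) < 1 - b * q := by nlinarith
  have hbU : (0:ℝ) < 1 - b * U := by nlinarith
  have hbV : (0:ℝ) < 1 - b * V := by nlinarith
  have hbS : (0:ℝ) < 1 - b * S := by nlinarith
  have hbW : (0:ℝ) < 1 - b * W := by nlinarith
  have hUV : (0:ℝ) < 1 - b * (U * V) := by nlinarith
  have key : S * ((1 - U) * (1 - V) * (1 - b * S) * (1 - b * W)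
      - (1 - S) * (1 - W) * (1 - b * U) * (1 - b * V))
      = (1 - b) * (U - S) * (V - S) * (1 - b * (U * V)) := by
    linear_combination ((b ^ 2 - b) * (U * V - U * S - V * S) + S * (b ^ 2 - 1) + (1 - b)) * hSW
  have hΔ : (1 - S) * (1 - W) * (1 - b * U) * (1 - b * V)
      ≤ (1 - U) * (1 - V) * (1 - b * S) * (1 - b * W) := by
    have hnn : (0:ℝ) ≤ (1 - b) * (U - S) * (V - S) * (1 - b * (U * V)) :=
      mul_nonneg (mul_nonneg (mul_nonneg (by linarith) (by linarith)) (by linarith)) hUV.le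
    have h3 : (0:ℝ) ≤ S * ((1 - U) * (1 - V) * (1 - b * S) * (1 - b * W)
        - (1 - S) * (1 - W) * (1 - b * U) * (1 - b * V)) := by rw [key]; exact hnn
    have h4 := (mul_nonneg_iff_of_pos_left hSpos).mp h3
    linarith
  unfold bqNum
  rw [ge_iff_le, div_mul_div_comm, div_mul_div_comm, div_le_div_iff₀ (by positivity) (by positivity)]
  have h2 := mul_le_mul_of_nonneg_left hΔ (by positivity : (0:ℝ) ≤ (1 - q)^2 * (1 - b*q)^2)
  calc _ = (1 - q)^2 * (1 - b*q)^2
        * ((1 - S) * (1 - W) * (1 - b * U) * (1 - b * V)) := by ring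
    _ ≤ (1 - q)^2 * (1 - b*q)^2
        * ((1 - U) * (1 - V) * (1 - b * S) * (1 - b * W)) := h2
    _ = _ := by ring
end

section
/- For 0 < q < 1, 0 < a < b < 1, and real x ≥ y ≥ r ≥ 0, the shifted log-concavity inequality [x]_{a q^{2r}, b q^{r}; q}·[y]_{a,b;q} ≥ [x+r]_{a,b;q}·[y-r]_{a q^{2r}, b q^{r}; q} holds. -/
/-- The a,b;q-number. -/
noncomputable def abqNum (a b q x : ℝ) : ℝ :=
  ((1 - q ^ x) * (1 - a * q ^ x) * (1 - b * q) * (1 - a * q / b)) /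
    ((1 - q) * (1 - a * q) * (1 - b * q ^ x) * (1 - a * q ^ x / b))

set_option maxHeartbeats 1600000 in
theorem abqNum_shifted_log_concave
    (a b q x y r : ℝ) (hq : 0 < q) (hq1 : q < 1) (ha : 0 < a) (hab : a < b) (hb1 : b < 1)
    (hxy : x ≥ y) (hyr : y ≥ r) (hr : r ≥ 0) :
    abqNum (a * q ^ (2 * r)) (b * q ^ r) q x * abqNum a b q y
      ≥ abqNum a b q (x + r) * abqNum (a * q ^ (2 * r)) (b * q ^ r) q (y - r) := by
  have hb0 : (0:ℝ) < b := ha.trans hab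
  have ha1 : a < 1 := hab.trans hb1
  have hu : 0 < q ^ x := Real.rpow_pos_of_pos hq x
  have hv : 0 < q ^ y := Real.rpow_pos_of_pos hq y
  have hs : 0 < q ^ r := Real.rpow_pos_of_pos hq r
  have hs1 : q ^ r ≤ 1 := Real.rpow_le_one hq.le hq1.le hr
  have huv : q ^ x ≤ q ^ y := Real.rpow_le_rpow_of_exponent_ge hq hq1.le hxy
  have hvs : q ^ y ≤ q ^ r := Real.rpow_le_rpow_of_exponent_ge hq hq1.le hyr
  have husv : q ^ x * q ^ r ≤ q ^ y := by
    rw [← Real.rpow_add hq]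
    exact Real.rpow_le_rpow_of_exponent_ge hq hq1.le (by linarith)
  have h2r : q ^ (2 * r) = q ^ r * q ^ r := by
    rw [two_mul, Real.rpow_add hq]
  have hxr : q ^ (x + r) = q ^ x * q ^ r := Real.rpow_add hq x r
  have hyr' : q ^ (y - r) = q ^ y / q ^ r := Real.rpow_sub hq y r
  rw [abqNum, abqNum, abqNum, abqNum, h2r, hxr, hyr']
  clear h2r hxr hyr'
  set u := q ^ x with hu_def
  set v := q ^ y with hv_def
  set s := q ^ r with hs_def
  clear_value u v s
  clear hu_def hv_def hs_def hxy hyr hr x y r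
  -- basic bounds
  have hv1 : v ≤ 1 := hvs.trans hs1
  have hu1 : u ≤ 1 := huv.trans hv1
  have hss1 : s * s ≤ 1 := mul_le_one₀ hs1 hs.le hs1
  have hus1 : u * s ≤ 1 := mul_le_one₀ hu1 hs.le hs1
  have hsu1 : s * u ≤ 1 := mul_le_one₀ hs1 hu.le hu1
  -- positivity of all factors
  have p1 : 0 < 1 - q := by linarith
  have p2 : 0 < 1 - a * q := by
    linarith [mul_nonneg ha.le (sub_nonneg.2 hq1.le)]
  have p3 : 0 < 1 - a * (s * s) * q := by
    linarith [mul_nonneg (mul_nonneg ha.le hq.le) (sub_nonneg.2 hss1), p2]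
  have p4 : 0 < 1 - b * q := by
    linarith [mul_nonneg hb0.le (sub_nonneg.2 hq1.le)]
  have p6 : 0 < 1 - b * s * q := by
    linarith [mul_nonneg (mul_nonneg hb0.le hq.le) (sub_nonneg.2 hs1), p4]
  have p8 : 0 < 1 - b * s * u := by
    linarith [mul_nonneg hb0.le (sub_nonneg.2 hsu1)]
  have p10 : 0 < 1 - b * v := by
    linarith [mul_nonneg hb0.le (sub_nonneg.2 hv1)]
  have d6 : 0 < 1 - b * (u * s) := by
    linarith [mul_nonneg hb0.le (sub_nonneg.2 hus1)]
  have q5 : 0 < b - a * q := by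
    linarith [mul_nonneg ha.le (sub_nonneg.2 hq1.le)]
  have q5s : 0 < b - a * s * q := by
    linarith [mul_nonneg (mul_nonneg ha.le hq.le) (sub_nonneg.2 hs1), q5]
  have q8 : 0 < b - a * s * u := by
    linarith [mul_nonneg ha.le (sub_nonneg.2 hsu1)]
  have q11 : 0 < b - a * v := by
    linarith [mul_nonneg ha.le (sub_nonneg.2 hv1)]
  have q11' : 0 < b - a * (u * s) := by
    linarith [mul_nonneg ha.le (sub_nonneg.2 hus1)]
  have d1 : 0 < 1 - a * (s * s) * q / (b * s) := by
    rw [sub_pos, div_lt_one (mul_pos hb0 hs)]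
    linarith [mul_pos hs q5s]
  have d2 : 0 < 1 - a * (s * s) * u / (b * s) := by
    rw [sub_pos, div_lt_one (mul_pos hb0 hs)]
    linarith [mul_pos hs q8]
  have d3 : 0 < 1 - a * q / b := by
    rw [sub_pos, div_lt_one hb0]; linarith
  have d4 : 0 < 1 - a * v / b := by
    rw [sub_pos, div_lt_one hb0]; linarith
  have d5 : 0 < 1 - a * (u * s) / b := by
    rw [sub_pos, div_lt_one hb0]
    linarith [mul_nonneg ha.le (sub_nonneg.2 hus1)]
  have e7 : b * s * (v / s) = b * v := by
    field_simp
  have e8 : a * (s * s) * (v / s) = a * s * v := by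
    field_simp
  have d7 : 0 < 1 - b * s * (v / s) := by rw [e7]; exact p10
  have d8 : 0 < 1 - a * (s * s) * (v / s) / (b * s) := by
    rw [e8, sub_pos, div_lt_one (mul_pos hb0 hs)]
    linarith [mul_pos hs q11]
  -- key polynomial inequality  NR ≤ NL * s
  have key : (1 - u * s) * (1 - a * (u * s)) * ((s - v) * (1 - a * s * v))
      ≤ (1 - u) * (1 - a * (s * s) * u) * ((1 - v) * (1 - a * v)) * s := by
    have h1 : (0:ℝ) ≤ 1 - s := by linarith
    have h2 : (0:ℝ) ≤ v - u * s := by linarith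
    have h3 : (0:ℝ) ≤ 1 - a * s := by
      linarith [mul_nonneg ha.le (sub_nonneg.2 hs1)]
    have h4 : (0:ℝ) ≤ 1 - a * u * v * s := by
      have hau : a * u ≤ 1 := mul_le_one₀ ha1.le hu.le hu1
      have hauv : a * u * v ≤ 1 := mul_le_one₀ hau hv.le hv1
      have := mul_le_one₀ hauv hs.le hs1
      linarith
    have hid : (1 - u) * (1 - a * (s * s) * u) * ((1 - v) * (1 - a * v)) * s -
        (1 - u * s) * (1 - a * (u * s)) * ((s - v) * (1 - a * s * v))
        = (1 - s) * (v - u * s) * (1 - a * s) * (1 - a * u * v * s) := by ring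
    linarith [mul_nonneg (mul_nonneg (mul_nonneg h1 h2) h3) h4, hid]
  have hG : 0 ≤ (1 - b * s * q) * (b - a * s * q) * ((1 - b * q) * (b - a * q)) :=
    le_of_lt (mul_pos (mul_pos p6 q5s) (mul_pos p4 q5))
  -- combined numerator inequality
  have key2 : (1 - u * s) * (1 - a * (u * s)) * (1 - b * q) * (b - a * q) *
        ((s - v) * (1 - a * s * v) * (1 - b * s * q) * (b - a * s * q))
      ≤ (1 - u) * (1 - a * (s * s) * u) * (1 - b * s * q) * (b - a * s * q) *
        ((1 - v) * (1 - a * v) * (1 - b * q) * (b - a * q)) * s := by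
    calc (1 - u * s) * (1 - a * (u * s)) * (1 - b * q) * (b - a * q) *
          ((s - v) * (1 - a * s * v) * (1 - b * s * q) * (b - a * s * q))
        = (1 - u * s) * (1 - a * (u * s)) * ((s - v) * (1 - a * s * v)) *
          ((1 - b * s * q) * (b - a * s * q) * ((1 - b * q) * (b - a * q))) := by ring
      _ ≤ (1 - u) * (1 - a * (s * s) * u) * ((1 - v) * (1 - a * v)) * s *
          ((1 - b * s * q) * (b - a * s * q) * ((1 - b * q) * (b - a * q))) :=
          mul_le_mul_of_nonneg_right key hG
      _ = (1 - u) * (1 - a * (s * s) * u) * (1 - b * s * q) * (b - a * s * q) *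
          ((1 - v) * (1 - a * v) * (1 - b * q) * (b - a * q)) * s := by ring
  -- denominator identity
  have hQid : (1 - q) * (1 - a * q) * (1 - b * (u * s)) * (b - a * (u * s)) *
        (s * ((1 - q) * (1 - a * (s * s) * q) * (1 - b * v) * (b - a * v)))
      = (1 - q) * (1 - a * (s * s) * q) * (1 - b * s * u) * (b - a * s * u) *
        ((1 - q) * (1 - a * q) * (1 - b * v) * (b - a * v)) * s := by ring
  -- original denominators positive
  have hD1 : 0 < (1 - q) * (1 - a * (s * s) * q) * (1 - b * s * u) * (1 - a * (s * s) * u / (b * s)) :=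
    mul_pos (mul_pos (mul_pos p1 p3) p8) d2
  have hD2 : 0 < (1 - q) * (1 - a * q) * (1 - b * v) * (1 - a * v / b) :=
    mul_pos (mul_pos (mul_pos p1 p2) p10) d4
  have hD3 : 0 < (1 - q) * (1 - a * q) * (1 - b * (u * s)) * (1 - a * (u * s) / b) :=
    mul_pos (mul_pos (mul_pos p1 p2) d6) d5
  have hD4 : 0 < (1 - q) * (1 - a * (s * s) * q) * (1 - b * s * (v / s)) * (1 - a * (s * s) * (v / s) / (b * s)) :=
    mul_pos (mul_pos (mul_pos p1 p3) d7) d8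
  -- cleared-denominator (polynomial) denominators positive
  have hQ1 : 0 < (1 - q) * (1 - a * (s * s) * q) * (1 - b * s * u) * (b - a * s * u) :=
    mul_pos (mul_pos (mul_pos p1 p3) p8) q8
  have hQ2 : 0 < (1 - q) * (1 - a * q) * (1 - b * v) * (b - a * v) :=
    mul_pos (mul_pos (mul_pos p1 p2) p10) q11
  have hQ3 : 0 < (1 - q) * (1 - a * q) * (1 - b * (u * s)) * (b - a * (u * s)) :=
    mul_pos (mul_pos (mul_pos p1 p2) d6) q11'
  have hQ4 : 0 < s * ((1 - q) * (1 - a * (s * s) * q) * (1 - b * v) * (b - a * v)) :=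
    mul_pos hs (mul_pos (mul_pos (mul_pos p1 p3) p10) q11)
  -- convert each abqNum factor to a polynomial ratio
  have t1e : (1 - u) * (1 - a * (s * s) * u) * (1 - b * s * q) * (1 - a * (s * s) * q / (b * s)) /
        ((1 - q) * (1 - a * (s * s) * q) * (1 - b * s * u) * (1 - a * (s * s) * u / (b * s)))
      = (1 - u) * (1 - a * (s * s) * u) * (1 - b * s * q) * (b - a * s * q) /
        ((1 - q) * (1 - a * (s * s) * q) * (1 - b * s * u) * (b - a * s * u)) := by
    rw [div_eq_div_iff hD1.ne' hQ1.ne']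
    field_simp
  have t2e : (1 - v) * (1 - a * v) * (1 - b * q) * (1 - a * q / b) /
        ((1 - q) * (1 - a * q) * (1 - b * v) * (1 - a * v / b))
      = (1 - v) * (1 - a * v) * (1 - b * q) * (b - a * q) /
        ((1 - q) * (1 - a * q) * (1 - b * v) * (b - a * v)) := by
    rw [div_eq_div_iff hD2.ne' hQ2.ne']
    field_simp
  have t3e : (1 - u * s) * (1 - a * (u * s)) * (1 - b * q) * (1 - a * q / b) /
        ((1 - q) * (1 - a * q) * (1 - b * (u * s)) * (1 - a * (u * s) / b))
      = (1 - u * s) * (1 - a * (u * s)) * (1 - b * q) * (b - a * q) /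
        ((1 - q) * (1 - a * q) * (1 - b * (u * s)) * (b - a * (u * s))) := by
    rw [div_eq_div_iff hD3.ne' hQ3.ne']
    field_simp
  have t4e : (1 - v / s) * (1 - a * (s * s) * (v / s)) * (1 - b * s * q) * (1 - a * (s * s) * q / (b * s)) /
        ((1 - q) * (1 - a * (s * s) * q) * (1 - b * s * (v / s)) * (1 - a * (s * s) * (v / s) / (b * s)))
      = (s - v) * (1 - a * s * v) * (1 - b * s * q) * (b - a * s * q) /
        (s * ((1 - q) * (1 - a * (s * s) * q) * (1 - b * v) * (b - a * v))) := by
    rw [div_eq_div_iff hD4.ne' hQ4.ne']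
    field_simp
  rw [ge_iff_le, t1e, t2e, t3e, t4e]
  -- abstract the polynomial blocks as atoms
  set A1 := (1 - u) * (1 - a * (s * s) * u) * (1 - b * s * q) * (b - a * s * q) with hA1
  set A2 := (1 - v) * (1 - a * v) * (1 - b * q) * (b - a * q) with hA2
  set A3 := (1 - u * s) * (1 - a * (u * s)) * (1 - b * q) * (b - a * q) with hA3
  set A4 := (s - v) * (1 - a * s * v) * (1 - b * s * q) * (b - a * s * q) with hA4
  set B1 := (1 - q) * (1 - a * (s * s) * q) * (1 - b * s * u) * (b - a * s * u) with hB1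
  set B2 := (1 - q) * (1 - a * q) * (1 - b * v) * (b - a * v) with hB2
  set B3 := (1 - q) * (1 - a * q) * (1 - b * (u * s)) * (b - a * (u * s)) with hB3
  set B4 := (1 - q) * (1 - a * (s * s) * q) * (1 - b * v) * (b - a * v) with hB4
  clear_value A1 A2 A3 A4 B1 B2 B3 B4
  clear t1e t2e t3e t4e hD1 hD2 hD3 hD4 d1 d2 d3 d4 d5 d6 d7 d8 e7 e8 key hG
  rw [div_mul_div_comm, div_mul_div_comm,
    div_le_div_iff₀ (mul_pos hQ3 hQ4) (mul_pos hQ1 hQ2), hQid]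
  clear hQ3 hQ4 hQid p1 p2 p3 p4 p6 p8 p10 q5 q5s q8 q11 q11' hss1 hus1 hsu1
  linarith [mul_le_mul_of_nonneg_right key2 (le_of_lt (mul_pos hQ1 hQ2))]
end

section
/- For real a, x, y, k, l, r, q with 0 < q < 1, 0 ≤ a < 1, x ≥ y, k ≥ l ≥ r ≥ 0, and y - l ≥ x - k ≥ 0, the a;q-binomial coefficients satisfy [x choose k]_{a;q}·[y choose l]_{a;q} ≥ [x choose k+r]_{a;q}·[y choose l-r]_{a;q}. -/
/-!
Writing `(t)_∞ := (q^t, a q^t; q)_∞`, one has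
`[x choose k]_{a;q} = q^{k(k-x)} (1+k)_∞ (1+x-k)_∞ / ((1)_∞ (1+x)_∞)`, so after clearing the common
denominators the inequality compares `(1+k)_∞ (1+l)_∞ · (1+x-k)_∞ (1+y-l)_∞` with
`q^e (1+k+r)_∞ (1+l-r)_∞ · (1+x-k-r)_∞ (1+y-l+r)_∞`, where
`e = r (k - l + 2r + (y-l) - (x-k)) ≥ 2r²`.
In each of the two pairs the arguments have the same sum and the left-hand pair is less spread out.
For such pairs `(1 - c q^s)(1 - c q^t) = 1 - c (q^s + q^t) + c² q^{s+t}` increases factor by factor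
(`c = 1` and `c = a`), because `q^s + q^t` decreases while `q^{s+t}` stays fixed.
The one complication is that `1 + x - k - r` may be negative. Then the first `n = ⌈r - x + k - 1⌉`
factors of `(1+x-k-r)_∞` may be negative; reflecting `s ↦ -s` bounds each in absolute value by
`q^{2s}` times a factor of `(1+x-k)_n`, and the spare power `q^{2r²}` absorbs these powers of `q`.
-/

/-- The a;q-binomial coefficient, defined via an infinite product. -/
noncomputable def aqBinom (a q x k : ℝ) : ℝ :=
  q ^ (k * (k - x)) *
    ∏' j : ℕ,
      ((1 - q ^ (1 + k + (j : ℝ))) * (1 - a * q ^ (1 + k + (j : ℝ)))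
          * (1 - q ^ (1 + x - k + (j : ℝ))) * (1 - a * q ^ (1 + x - k + (j : ℝ)))) /
        ((1 - q ^ (1 + (j : ℝ))) * (1 - a * q ^ (1 + (j : ℝ)))
          * (1 - q ^ (1 + x + (j : ℝ))) * (1 - a * q ^ (1 + x + (j : ℝ))))

open Finset

lemma tprod_le_tprod_of_nonneg {ι : Type*} {f g : ι → ℝ} (hf : Multipliable f)
    (hg : Multipliable g) (h₀ : ∀ i, 0 ≤ f i) (h : ∀ i, f i ≤ g i) : ∏' i, f i ≤ ∏' i, g i :=
  le_of_tendsto_of_tendsto' hf.hasProd hg.hasProd fun _ =>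
    prod_le_prod (fun i _ => h₀ i) fun i _ => h i

namespace AqBinom

noncomputable def aqFactor (a q t : ℝ) : ℝ := (1 - q ^ t) * (1 - a * q ^ t)

/-- `aqPoch a q t` is the infinite q-shifted factorial `(q^t, a q^t; q)_∞`. -/
noncomputable def aqPoch (a q t : ℝ) : ℝ := ∏' j : ℕ, aqFactor a q (t + j)

variable {a q : ℝ}

lemma aqFactor_pos (ha : a ∈ Set.Ico 0 1) (hq : q ∈ Set.Ioo 0 1) {t : ℝ} (ht : 0 < t) :
    0 < aqFactor a q t := by
  have h₁ : q ^ t < 1 := Real.rpow_lt_one hq.1.le hq.2 ht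
  have h₂ : a * q ^ t < 1 := by nlinarith [ha.1, ha.2, Real.rpow_pos_of_pos hq.1 t]
  exact mul_pos (by linarith) (by linarith)

lemma aqFactor_nonneg (ha : a ∈ Set.Ico 0 1) (hq : q ∈ Set.Ioo 0 1) {t : ℝ} (ht : 0 ≤ t) :
    0 ≤ aqFactor a q t := by
  have h₁ : q ^ t ≤ 1 := Real.rpow_le_one hq.1.le hq.2.le ht
  have h₂ : a * q ^ t ≤ 1 := by nlinarith [ha.1, ha.2, Real.rpow_pos_of_pos hq.1 t]
  exact mul_nonneg (by linarith) (by linarith)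

lemma aqFactor_le_aqFactor (ha : a ∈ Set.Ico 0 1) (hq : q ∈ Set.Ioo 0 1) {s t : ℝ}
    (hs : 0 ≤ s) (hst : s ≤ t) : aqFactor a q s ≤ aqFactor a q t := by
  have h₁ : q ^ t ≤ q ^ s := Real.rpow_le_rpow_of_exponent_ge hq.1 hq.2.le hst
  have h₂ : q ^ s ≤ 1 := Real.rpow_le_one hq.1.le hq.2.le hs
  have h₃ : 0 < q ^ t := Real.rpow_pos_of_pos hq.1 t
  unfold aqFactor
  nlinarith [ha.1, ha.2, mul_le_mul_of_nonneg_left h₁ ha.1]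

lemma aqFactor_add_natCast (hq : 0 < q) (t : ℝ) (j : ℕ) :
    aqFactor a q (t + j) = 1 - (1 + a) * q ^ t * q ^ j + a * q ^ (2 * t) * (q ^ 2) ^ j := by
  have h₁ : q ^ (t + j) = q ^ t * q ^ j := by rw [Real.rpow_add hq, Real.rpow_natCast]
  have h₂ : q ^ (2 * t) = (q ^ t) ^ 2 := by
    rw [mul_comm, Real.rpow_mul hq.le, Real.rpow_two]
  rw [aqFactor, h₁, h₂]
  ring

lemma summable_aqFactor_sub_one (hq : q ∈ Set.Ioo 0 1) (t : ℝ) :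
    Summable fun j : ℕ => aqFactor a q (t + j) - 1 := by
  have hq2 : q ^ 2 < 1 := by nlinarith [hq.1, hq.2]
  have hs : Summable fun j : ℕ => -(1 + a) * q ^ t * q ^ j + a * q ^ (2 * t) * (q ^ 2) ^ j :=
    ((summable_geometric_of_lt_one hq.1.le hq.2).mul_left _).add
      ((summable_geometric_of_lt_one (by positivity) hq2).mul_left _)
  convert hs using 2 with j
  rw [aqFactor_add_natCast hq.1]
  ring

lemma multipliable_aqFactor (hq : q ∈ Set.Ioo 0 1) (t : ℝ) :
    Multipliable fun j : ℕ => aqFactor a q (t + j) := by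
  simpa using Real.multipliable_one_add_of_summable (summable_aqFactor_sub_one (a := a) hq t)

lemma aqPoch_pos (ha : a ∈ Set.Ico 0 1) (hq : q ∈ Set.Ioo 0 1) {t : ℝ} (ht : 0 < t) :
    0 < aqPoch a q t := by
  have hlog : Summable fun j : ℕ => Real.log (aqFactor a q (t + j)) := by
    simpa using Real.summable_log_one_add_of_summable (summable_aqFactor_sub_one (a := a) hq t)
  rw [aqPoch, ← Real.rexp_tsum_eq_tprod (fun j => aqFactor_pos ha hq (by positivity)) hlog]
  exact Real.exp_pos _

lemma aqPoch_nonneg (ha : a ∈ Set.Ico 0 1) (hq : q ∈ Set.Ioo 0 1) {t : ℝ} (ht : 0 ≤ t) :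
    0 ≤ aqPoch a q t :=
  tprod_nonneg fun j => aqFactor_nonneg ha hq (by positivity)

lemma aqPoch_eq_prod_mul (hq : q ∈ Set.Ioo 0 1) (t : ℝ) (n : ℕ) :
    aqPoch a q t = (∏ j ∈ range n, aqFactor a q (t + j)) * aqPoch a q (t + n) := by
  have hshift : ∀ j : ℕ, aqFactor a q (t + n + j) = aqFactor a q (t + ↑(j + n)) := fun j => by
    congr 1; push_cast; ring
  rw [aqPoch, aqPoch, tprod_congr hshift]
  exact (Multipliable.prod_mul_tprod_nat_mul' (f := fun j : ℕ => aqFactor a q (t + j))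
    ((multipliable_aqFactor hq (t + n)).congr hshift)).symm

lemma aqBinom_eq_aqPoch (ha : a ∈ Set.Ico 0 1) (hq : q ∈ Set.Ioo 0 1) {x : ℝ} (hx : -1 < x)
    (k : ℝ) :
    aqBinom a q x k = q ^ (k * (k - x)) *
      (aqPoch a q (1 + k) * aqPoch a q (1 + x - k) / (aqPoch a q 1 * aqPoch a q (1 + x))) := by
  have hden : aqPoch a q 1 * aqPoch a q (1 + x) ≠ 0 :=
    (mul_pos (aqPoch_pos ha hq one_pos) (aqPoch_pos ha hq (by linarith))).ne'
  have m := multipliable_aqFactor (a := a) hq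
  have hdiv : HasProd
      (fun j : ℕ => aqFactor a q (1 + k + j) * aqFactor a q (1 + x - k + j) /
        (aqFactor a q (1 + j) * aqFactor a q (1 + x + j)))
      (aqPoch a q (1 + k) * aqPoch a q (1 + x - k) / (aqPoch a q 1 * aqPoch a q (1 + x))) :=
    ((m _).hasProd.mul (m _).hasProd).div₀ ((m _).hasProd.mul (m _).hasProd) hden
  rw [aqBinom, ← hdiv.tprod_eq]
  congr 1
  exact tprod_congr fun j => by simp only [aqFactor]; ring

lemma aqFactor_mul_aqFactor_le (ha : a ∈ Set.Ico 0 1) (hq : q ∈ Set.Ioo 0 1)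
    {t₁ t₂ s₁ s₂ : ℝ} (ht₁ : 0 ≤ t₁) (h₁ : t₁ ≤ s₁) (h₂ : t₁ ≤ s₂) (hsum : t₁ + t₂ = s₁ + s₂) :
    aqFactor a q t₁ * aqFactor a q t₂ ≤ aqFactor a q s₁ * aqFactor a q s₂ := by
  have hprod : q ^ t₁ * q ^ t₂ = q ^ s₁ * q ^ s₂ := by
    rw [← Real.rpow_add hq.1, ← Real.rpow_add hq.1, hsum]
  have hZ : q ^ s₁ ≤ q ^ t₁ := Real.rpow_le_rpow_of_exponent_ge hq.1 hq.2.le h₁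
  have hW : q ^ s₂ ≤ q ^ t₁ := Real.rpow_le_rpow_of_exponent_ge hq.1 hq.2.le h₂
  have hX1 : q ^ t₁ ≤ 1 := Real.rpow_le_one hq.1.le hq.2.le ht₁
  have hY1 : q ^ t₂ ≤ 1 := Real.rpow_le_one hq.1.le hq.2.le (by linarith)
  have hZ1 : q ^ s₁ ≤ 1 := Real.rpow_le_one hq.1.le hq.2.le (by linarith)
  have hW1 : q ^ s₂ ≤ 1 := Real.rpow_le_one hq.1.le hq.2.le (by linarith)
  have hX0 : 0 < q ^ t₁ := Real.rpow_pos_of_pos hq.1 t₁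
  have hY0 : 0 < q ^ t₂ := Real.rpow_pos_of_pos hq.1 t₂
  -- for `X, Y, Z, W = q^t₁, q^t₂, q^s₁, q^s₂`: `X (X + Y - Z - W) = (X - Z) (X - W)` as `XY = ZW`
  have hsum' : q ^ s₁ + q ^ s₂ ≤ q ^ t₁ + q ^ t₂ := by
    nlinarith [mul_nonneg (sub_nonneg.2 hZ) (sub_nonneg.2 hW)]
  have hpair : ∀ c : ℝ, 0 ≤ c → (1 - c * q ^ t₁) * (1 - c * q ^ t₂) ≤
      (1 - c * q ^ s₁) * (1 - c * q ^ s₂) := fun c hc => by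
    nlinarith [mul_le_mul_of_nonneg_left hsum' hc, congrArg (c ^ 2 * ·) hprod]
  calc aqFactor a q t₁ * aqFactor a q t₂
      = (1 - 1 * q ^ t₁) * (1 - 1 * q ^ t₂) * ((1 - a * q ^ t₁) * (1 - a * q ^ t₂)) := by
        simp only [aqFactor]; ring
    _ ≤ (1 - 1 * q ^ s₁) * (1 - 1 * q ^ s₂) * ((1 - a * q ^ s₁) * (1 - a * q ^ s₂)) :=
        mul_le_mul (hpair 1 zero_le_one) (hpair a ha.1)
          (mul_nonneg (by nlinarith [ha.2]) (by nlinarith [ha.2]))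
          (mul_nonneg (by linarith) (by linarith))
    _ = aqFactor a q s₁ * aqFactor a q s₂ := by simp only [aqFactor]; ring

lemma aqPoch_mul_aqPoch_le (ha : a ∈ Set.Ico 0 1) (hq : q ∈ Set.Ioo 0 1)
    {t₁ t₂ s₁ s₂ : ℝ} (ht₁ : 0 ≤ t₁) (h₁ : t₁ ≤ s₁) (h₂ : t₁ ≤ s₂) (hsum : t₁ + t₂ = s₁ + s₂) :
    aqPoch a q t₁ * aqPoch a q t₂ ≤ aqPoch a q s₁ * aqPoch a q s₂ := by
  have m := multipliable_aqFactor (a := a) hq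
  rw [aqPoch, aqPoch, aqPoch, aqPoch, ← (m t₁).tprod_mul (m t₂), ← (m s₁).tprod_mul (m s₂)]
  refine tprod_le_tprod_of_nonneg ((m t₁).mul (m t₂)) ((m s₁).mul (m s₂)) (fun j => ?_)
    (fun j => ?_)
  · exact mul_nonneg (aqFactor_nonneg ha hq (by positivity))
      (aqFactor_nonneg ha hq (by linarith [(Nat.cast_nonneg j : (0 : ℝ) ≤ j)]))
  · exact aqFactor_mul_aqFactor_le ha hq (by positivity) (by linarith) (by linarith)
      (by linarith)

lemma abs_aqFactor_le (ha : a ∈ Set.Ico 0 1) (hq : q ∈ Set.Ioo 0 1) {s t : ℝ} (hs : s ≤ 0)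
    (hst : -s ≤ t) : |aqFactor a q s| ≤ q ^ (2 * s) * aqFactor a q t := by
  have hY : 1 ≤ q ^ s := Real.one_le_rpow_of_pos_of_le_one_of_nonpos hq.1 hq.2.le hs
  have hrefl : q ^ (2 * s) * aqFactor a q (-s) = (q ^ s - 1) * (q ^ s - a) := by
    rw [aqFactor, Real.rpow_neg hq.1.le, mul_comm 2 s, Real.rpow_mul hq.1.le, Real.rpow_two]
    field_simp
  have habs : |aqFactor a q s| ≤ (q ^ s - 1) * (q ^ s - a) := by
    rw [aqFactor, abs_mul, abs_of_nonpos (by linarith : 1 - q ^ s ≤ 0), neg_sub]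
    refine mul_le_mul_of_nonneg_left (abs_le.2 ⟨?_, ?_⟩) (by linarith)
    · nlinarith [ha.2]
    · nlinarith [ha.1]
  calc |aqFactor a q s| ≤ q ^ (2 * s) * aqFactor a q (-s) := hrefl ▸ habs
    _ ≤ q ^ (2 * s) * aqFactor a q t :=
        mul_le_mul_of_nonneg_left (aqFactor_le_aqFactor ha hq (by linarith) hst)
          (Real.rpow_pos_of_pos hq.1 _).le

lemma abs_prod_aqFactor_le (ha : a ∈ Set.Ico 0 1) (hq : q ∈ Set.Ioo 0 1) {u b : ℝ} {n : ℕ}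
    (hu : u + n ≤ 1) (hb : 1 ≤ b + u + n) :
    |∏ j ∈ range n, aqFactor a q (u + j)| ≤
      (q ^ (2 * u)) ^ n * ∏ j ∈ range n, aqFactor a q (b + j) := by
  rw [abs_prod, ← prod_range_reflect (fun j : ℕ => aqFactor a q (b + j)) n,
    show (q ^ (2 * u)) ^ n = ∏ _j ∈ range n, q ^ (2 * u) by simp, ← prod_mul_distrib]
  refine prod_le_prod (fun j _ => abs_nonneg _) fun j hj => ?_
  have hjn : j + 1 ≤ n := mem_range.1 hj
  have hcast : ((n - 1 - j : ℕ) : ℝ) = n - 1 - j := by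
    rw [Nat.sub_sub, Nat.cast_sub (by omega)]; push_cast; ring
  have hj : (j : ℝ) + 1 ≤ n := by exact_mod_cast hjn
  have hj0 : (0 : ℝ) ≤ j := Nat.cast_nonneg j
  simp only [hcast]
  calc |aqFactor a q (u + j)| ≤ q ^ (2 * (u + j)) * aqFactor a q (b + (n - 1 - j)) :=
        abs_aqFactor_le ha hq (by linarith) (by linarith)
    _ ≤ q ^ (2 * u) * aqFactor a q (b + (n - 1 - j)) :=
        mul_le_mul_of_nonneg_right (Real.rpow_le_rpow_of_exponent_ge hq.1 hq.2.le (by linarith))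
          (aqFactor_nonneg ha hq (by linarith))

lemma rpow_mul_aqPoch_sub_mul_aqPoch_add_le (ha : a ∈ Set.Ico 0 1) (hq : q ∈ Set.Ioo 0 1)
    {b d r e : ℝ} (hb : 1 ≤ b) (hbd : b ≤ d) (hr : 0 ≤ r) (he : 2 * r ^ 2 ≤ e) :
    q ^ e * (aqPoch a q (b - r) * aqPoch a q (d + r)) ≤ aqPoch a q b * aqPoch a q d := by
  rcases le_or_gt r b with hrb | hbr
  · have hqe : q ^ e ≤ 1 := Real.rpow_le_one hq.1.le hq.2.le (by nlinarith)
    calc q ^ e * (aqPoch a q (b - r) * aqPoch a q (d + r))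
        ≤ 1 * (aqPoch a q (b - r) * aqPoch a q (d + r)) :=
          mul_le_mul_of_nonneg_right hqe (mul_nonneg (aqPoch_nonneg ha hq (by linarith))
            (aqPoch_nonneg ha hq (by linarith)))
      _ ≤ aqPoch a q b * aqPoch a q d := by
          rw [one_mul]
          exact aqPoch_mul_aqPoch_le ha hq (by linarith) (by linarith) (by linarith) (by ring)
  -- Split off the first `n = ⌈r - b⌉` factors of `aqPoch (b - r)`, the only ones that can be
  -- negative.
  set n := ⌈r - b⌉₊
  have hn₁ : r - b ≤ n := Nat.le_ceil _
  have hn₂ : (n : ℝ) < r - b + 1 := Nat.ceil_lt_add_one (by linarith)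
  set H := ∏ j ∈ range n, aqFactor a q (b - r + j)
  set H' := ∏ j ∈ range n, aqFactor a q (b + j)
  have hH' : 0 ≤ H' := prod_nonneg fun j _ => aqFactor_nonneg ha hq (by positivity)
  have hhead : |H| ≤ (q ^ (2 * (b - r))) ^ n * H' :=
    abs_prod_aqFactor_le ha hq (by linarith) (by linarith)
  have htail : aqPoch a q (b - r + n) * aqPoch a q (d + r) ≤ aqPoch a q (b + n) * aqPoch a q d :=
    aqPoch_mul_aqPoch_le ha hq (by linarith) (by linarith) (by linarith) (by ring)
  have htail₀ : 0 ≤ aqPoch a q (b - r + n) * aqPoch a q (d + r) :=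
    mul_nonneg (aqPoch_nonneg ha hq (by linarith)) (aqPoch_nonneg ha hq (by linarith))
  have hexp : q ^ e * (q ^ (2 * (b - r))) ^ n ≤ 1 := by
    rw [← Real.rpow_natCast, ← Real.rpow_mul hq.1.le, ← Real.rpow_add hq.1]
    refine Real.rpow_le_one hq.1.le hq.2.le ?_
    nlinarith [mul_le_mul (show (n : ℝ) ≤ r by linarith) (show r - b ≤ r by linarith)
      (by linarith) hr]
  have hqe : 0 ≤ q ^ e := (Real.rpow_pos_of_pos hq.1 e).le
  rw [aqPoch_eq_prod_mul hq (b - r) n, aqPoch_eq_prod_mul hq b n]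
  calc q ^ e * (H * aqPoch a q (b - r + n) * aqPoch a q (d + r))
      = q ^ e * H * (aqPoch a q (b - r + n) * aqPoch a q (d + r)) := by ring
    _ ≤ q ^ e * ((q ^ (2 * (b - r))) ^ n * H') * (aqPoch a q (b - r + n) * aqPoch a q (d + r)) :=
        mul_le_mul_of_nonneg_right
          (mul_le_mul_of_nonneg_left ((le_abs_self H).trans hhead) hqe) htail₀
    _ = q ^ e * (q ^ (2 * (b - r))) ^ n * (H' * (aqPoch a q (b - r + n) * aqPoch a q (d + r))) := by
        ring
    _ ≤ 1 * (H' * (aqPoch a q (b + n) * aqPoch a q d)) :=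
        mul_le_mul hexp (mul_le_mul_of_nonneg_left htail hH') (mul_nonneg hH' htail₀) zero_le_one
    _ = H' * aqPoch a q (b + n) * aqPoch a q d := by ring

lemma aqBinom_mul_aqBinom (ha : a ∈ Set.Ico 0 1) (hq : q ∈ Set.Ioo 0 1) {x y : ℝ}
    (hx : -1 < x) (hy : -1 < y) (k l : ℝ) :
    aqBinom a q x k * aqBinom a q y l =
      q ^ (k * (k - x) + l * (l - y)) /
          (aqPoch a q 1 * aqPoch a q (1 + x) * (aqPoch a q 1 * aqPoch a q (1 + y))) *
        (aqPoch a q (1 + k) * aqPoch a q (1 + l) *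
          (aqPoch a q (1 + x - k) * aqPoch a q (1 + y - l))) := by
  rw [aqBinom_eq_aqPoch ha hq hx, aqBinom_eq_aqPoch ha hq hy, Real.rpow_add hq.1]
  ring

end AqBinom

open AqBinom in
theorem aqBinom_strongly_log_concave_general
    (a q x y k l r : ℝ) (hq : 0 < q) (hq1 : q < 1) (ha : 0 ≤ a) (ha1 : a < 1)
    (hkl : k ≥ l) (hlr : l ≥ r) (hr : r ≥ 0)
    (h1 : y - l ≥ x - k) (h2 : x - k ≥ 0) :
    aqBinom a q x k * aqBinom a q y l ≥ aqBinom a q x (k + r) * aqBinom a q y (l - r) := by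
  have ha' : a ∈ Set.Ico 0 1 := ⟨ha, ha1⟩
  have hq' : q ∈ Set.Ioo 0 1 := ⟨hq, hq1⟩
  have hP : ∀ {t}, 0 ≤ t → 0 ≤ aqPoch a q t := aqPoch_nonneg ha' hq'
  obtain ⟨e, he⟩ : ∃ e, e = r * ((k - l) + 2 * r + (y - l) - (x - k)) := ⟨_, rfl⟩
  have hexp : (k + r) * (k + r - x) + (l - r) * (l - r - y) =
      k * (k - x) + l * (l - y) + e := by rw [he]; ring
  have hfirst : aqPoch a q (1 + (k + r)) * aqPoch a q (1 + (l - r)) ≤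
      aqPoch a q (1 + k) * aqPoch a q (1 + l) := by
    rw [mul_comm]
    exact aqPoch_mul_aqPoch_le ha' hq' (by linarith) (by linarith) (by linarith) (by ring)
  have hsecond : q ^ e * (aqPoch a q (1 + x - (k + r)) * aqPoch a q (1 + y - (l - r))) ≤
      aqPoch a q (1 + x - k) * aqPoch a q (1 + y - l) := by
    have h := rpow_mul_aqPoch_sub_mul_aqPoch_add_le ha' hq' (b := 1 + x - k) (d := 1 + y - l)
      (e := e) (by linarith) (by linarith) hr
      (by rw [he]; nlinarith [mul_nonneg hr (by linarith : 0 ≤ (k - l) + (y - l) - (x - k))])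
    rwa [show 1 + x - k - r = 1 + x - (k + r) by ring,
      show 1 + y - l + r = 1 + y - (l - r) by ring] at h
  rw [ge_iff_le, aqBinom_mul_aqBinom ha' hq' (by linarith) (by linarith),
    aqBinom_mul_aqBinom ha' hq' (by linarith) (by linarith), hexp, Real.rpow_add hq,
    mul_div_right_comm, mul_assoc, mul_left_comm (q ^ e)]
  refine mul_le_mul_of_nonneg_left ?_ (div_nonneg (Real.rpow_pos_of_pos hq _).le
    (mul_nonneg (mul_nonneg (hP zero_le_one) (hP (by linarith)))
      (mul_nonneg (hP zero_le_one) (hP (by linarith)))))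
  exact (mul_le_mul_of_nonneg_left hsecond (mul_nonneg (hP (by linarith)) (hP (by linarith)))).trans
    (mul_le_mul_of_nonneg_right hfirst (mul_nonneg (hP (by linarith)) (hP (by linarith))))

theorem aqBinom_strongly_log_concave
    (a q x y k l r : ℝ) (hq : 0 < q) (hq1 : q < 1) (ha : 0 ≤ a) (ha1 : a < 1)
    (hxy : x ≥ y) (hkl : k ≥ l) (hlr : l ≥ r) (hr : r ≥ 0)
    (h1 : y - l ≥ x - k) (h2 : x - k ≥ 0) :
    aqBinom a q x k * aqBinom a q y l ≥ aqBinom a q x (k + r) * aqBinom a q y (l - r) :=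
  aqBinom_strongly_log_concave_general a q x y k l r hq hq1 ha ha1 hkl hlr hr h1 h2
end
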